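/- Let η₁ ∈ ℂ ∖ {0} and let g be holomorphic on an open set containing the half-open segment {t η₁ : 0 < t ≤ 1}, such that the primitive G(t) := lim_{ε→0⁺} ∫_ε^t g(s η₁) η₁ ds exists for every t ∈ (0, 1] and G(t) → 0 as t → 0⁺. Let Φ(ζ) = (1/(2πi)) lim_{ε→0⁺} ∫_ε^1 g(t η₁) η₁ / (t η₁ − ζ) dt for ζ off the closed segment {t η₁ : 0 ≤ t ≤ 1}. Then for every t₀ ∈ (0, 1): lim_{ε→0⁺} ( Φ(t₀ η₁ + i ε η₁) − Φ(t₀ η₁ − i ε η₁) ) = g(t₀ η₁). That is, the variation (jump across the cut) of the adapted major Φ equals g. -/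

import Mathlib

/-!
Write `F t = g (t η₁) η₁` and `P_ε t = ε / ((t - t₀)² + ε²)`. At `ζ = (t₀ ± iε) η₁` the two
Cauchy integrands differ by `(2i / η₁) P_ε t F t`, so `Φ ζ₊ - Φ ζ₋ = (π η₁)⁻¹ ∫₀¹ P_ε F`, an
improper integral at `0`. Split it at `c = t₀ / 2`. On `[c, 1]` the kernels `P_ε / π` are peak
functions at `t₀`, so that part tends to `π F t₀`. On `(0, c]`, where `F` need not be integrable,
integrate by parts against the primitive `G`, which is continuous on `[0, c]`: what remains only
involves `P_ε` and `∂ₜ P_ε` away from `t₀`, and these tend to `0` uniformly as `ε → 0⁺`.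
-/

open MeasureTheory Topology Filter Set intervalIntegral

noncomputable def halfPlanePoissonKernel (t₀ ε t : ℝ) : ℝ := ε / ((t - t₀) ^ 2 + ε ^ 2)

noncomputable def halfPlanePoissonKernelDeriv (t₀ ε t : ℝ) : ℝ :=
  -(2 * ε * (t - t₀)) / ((t - t₀) ^ 2 + ε ^ 2) ^ 2

section PoissonKernel

variable {t₀ ε t : ℝ}

theorem sub_sq_add_sq_ne_zero (h : t ≠ t₀ ∨ ε ≠ 0) : (t - t₀) ^ 2 + ε ^ 2 ≠ 0 := by
  rcases h with h | h
  · have := sub_ne_zero.2 h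
    positivity
  · positivity

@[simp] theorem halfPlanePoissonKernel_zero (t₀ t : ℝ) : halfPlanePoissonKernel t₀ 0 t = 0 := by
  simp [halfPlanePoissonKernel]

@[simp] theorem halfPlanePoissonKernelDeriv_zero (t₀ t : ℝ) :
    halfPlanePoissonKernelDeriv t₀ 0 t = 0 := by
  simp [halfPlanePoissonKernelDeriv]

theorem halfPlanePoissonKernel_nonneg (hε : 0 ≤ ε) : 0 ≤ halfPlanePoissonKernel t₀ ε t :=
  div_nonneg hε (by positivity)

theorem continuousAt_uncurry_halfPlanePoissonKernel (h : t ≠ t₀ ∨ ε ≠ 0) :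
    ContinuousAt (Function.uncurry (halfPlanePoissonKernel t₀)) (ε, t) :=
  ContinuousAt.div (by fun_prop) (by fun_prop) (sub_sq_add_sq_ne_zero h)

theorem continuousAt_uncurry_halfPlanePoissonKernelDeriv (h : t ≠ t₀ ∨ ε ≠ 0) :
    ContinuousAt (Function.uncurry (halfPlanePoissonKernelDeriv t₀)) (ε, t) :=
  ContinuousAt.div (by fun_prop) (by fun_prop) (pow_ne_zero 2 (sub_sq_add_sq_ne_zero h))

theorem continuous_halfPlanePoissonKernel (hε : ε ≠ 0) :
    Continuous (halfPlanePoissonKernel t₀ ε) :=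
  continuous_iff_continuousAt.2 fun _ ↦
    (continuousAt_uncurry_halfPlanePoissonKernel (Or.inr hε)).comp (by fun_prop)

theorem continuous_halfPlanePoissonKernelDeriv (hε : ε ≠ 0) :
    Continuous (halfPlanePoissonKernelDeriv t₀ ε) :=
  continuous_iff_continuousAt.2 fun _ ↦
    (continuousAt_uncurry_halfPlanePoissonKernelDeriv (Or.inr hε)).comp (by fun_prop)

theorem hasDerivAt_halfPlanePoissonKernel (hε : ε ≠ 0) :
    HasDerivAt (halfPlanePoissonKernel t₀ ε) (halfPlanePoissonKernelDeriv t₀ ε t) t := by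
  have hden : HasDerivAt (fun u ↦ (u - t₀) ^ 2 + ε ^ 2) (2 * (t - t₀)) t := by
    simpa using (((hasDerivAt_id t).sub_const t₀).pow 2).add_const (ε ^ 2)
  refine ((hasDerivAt_const t ε).div hden (sub_sq_add_sq_ne_zero (Or.inr hε))).congr_deriv ?_
  rw [halfPlanePoissonKernelDeriv]
  ring

theorem hasDerivAt_arctan_sub_div (hε : ε ≠ 0) :
    HasDerivAt (fun t ↦ Real.arctan ((t - t₀) / ε)) (halfPlanePoissonKernel t₀ ε t) t := by
  have hd := sub_sq_add_sq_ne_zero (t₀ := t₀) (t := t) (Or.inr hε)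
  refine (((hasDerivAt_id t).sub_const t₀).div_const ε).arctan.congr_deriv ?_
  rw [halfPlanePoissonKernel, id]
  field_simp
  ring

theorem integral_halfPlanePoissonKernel (hε : ε ≠ 0) (a b : ℝ) :
    ∫ t in a..b, halfPlanePoissonKernel t₀ ε t =
      Real.arctan ((b - t₀) / ε) - Real.arctan ((a - t₀) / ε) :=
  integral_eq_sub_of_hasDerivAt (fun _ _ ↦ hasDerivAt_arctan_sub_div hε)
    ((continuous_halfPlanePoissonKernel hε).intervalIntegrable _ _)

theorem tendsto_integral_halfPlanePoissonKernel {a b : ℝ} (ha : a < t₀) (hb : t₀ < b) :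
    Tendsto (fun ε ↦ ∫ t in a..b, halfPlanePoissonKernel t₀ ε t) (𝓝[>] 0) (𝓝 Real.pi) := by
  have hb' : Tendsto (fun ε ↦ Real.arctan ((b - t₀) * ε⁻¹)) (𝓝[>] 0) (𝓝 (Real.pi / 2)) :=
    (tendsto_nhds_of_tendsto_nhdsWithin Real.tendsto_arctan_atTop).comp
      (tendsto_inv_nhdsGT_zero.const_mul_atTop (sub_pos.2 hb))
  have ha' : Tendsto (fun ε ↦ Real.arctan ((a - t₀) * ε⁻¹)) (𝓝[>] 0) (𝓝 (-(Real.pi / 2))) :=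
    (tendsto_nhds_of_tendsto_nhdsWithin Real.tendsto_arctan_atBot).comp
      ((tendsto_const_mul_atBot_of_neg (sub_neg.2 ha)).2 tendsto_inv_nhdsGT_zero)
  rw [show Real.pi = Real.pi / 2 - -(Real.pi / 2) by ring]
  refine (hb'.sub ha').congr' ?_
  filter_upwards [self_mem_nhdsWithin] with ε hε
  rw [integral_halfPlanePoissonKernel (ne_of_gt hε), div_eq_mul_inv, div_eq_mul_inv]

end PoissonKernel

theorem tendstoUniformlyOn_nhdsGT_zero_of_continuousOn {β γ : Type*} [UniformSpace β]
    [UniformSpace γ] {f : ℝ → β → γ} {K : Set β} (hK : IsCompact K)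
    (hf : ContinuousOn (Function.uncurry f) (Icc 0 1 ×ˢ K)) :
    TendstoUniformlyOn f (f 0) (𝓝[>] 0) K := by
  have := ((isCompact_Icc.prod hK).uniformContinuousOn_of_continuous hf).tendstoUniformlyOn
    (left_mem_Icc.2 zero_le_one)
  refine fun u hu ↦ (this u hu).filter_mono ?_
  rw [← nhdsWithin_Ioo_eq_nhdsGT zero_lt_one]
  exact nhdsWithin_mono _ Ioo_subset_Icc_self

section VectorValued

variable {E : Type*} [NormedAddCommGroup E] [NormedSpace ℝ E]

theorem tendsto_integral_halfPlanePoissonKernel_smul [CompleteSpace E] {F : ℝ → E} {a b t₀ : ℝ}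
    (ha : a < t₀) (hb : t₀ < b) (hF : ContinuousOn F (Icc a b)) :
    Tendsto (fun ε ↦ ∫ t in a..b, halfPlanePoissonKernel t₀ ε t • F t) (𝓝[>] 0)
      (𝓝 (Real.pi • F t₀)) := by
  set φ : ℝ → ℝ → ℝ := fun ε t ↦ Real.pi⁻¹ * halfPlanePoissonKernel t₀ ε t
  have hpeak : Tendsto (fun ε ↦ ∫ t in Ioc a b, φ ε t • F t) (𝓝[>] 0) (𝓝 (F t₀)) := by
    refine tendsto_setIntegral_peak_smul_of_integrableOn_of_tendsto measurableSet_Ioc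
      measurableSet_Ioc subset_rfl self_mem_nhdsWithin measure_Ioc_lt_top.ne ?_ ?_ ?_ ?_
      ((hF.integrableOn_Icc).mono_set Ioc_subset_Icc_self)
      ((hF t₀ ⟨ha.le, hb.le⟩).mono Ioc_subset_Icc_self)
    · filter_upwards [self_mem_nhdsWithin] with ε (hε : 0 < ε) t _
      exact mul_nonneg (by positivity) (halfPlanePoissonKernel_nonneg hε.le)
    · intro u hu ht₀
      have hφ0 : φ 0 = 0 := by ext; simp [φ]
      rw [← hφ0]
      refine (tendstoUniformlyOn_nhdsGT_zero_of_continuousOn (isCompact_Icc.diff hu) ?_).mono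
        (sdiff_subset_sdiff_left Ioc_subset_Icc_self)
      rintro ⟨ε, t⟩ ⟨-, -, htu⟩
      exact (continuousAt_const.mul (continuousAt_uncurry_halfPlanePoissonKernel
        (Or.inl (ne_of_mem_of_not_mem ht₀ htu).symm))).continuousWithinAt
    · have := (tendsto_integral_halfPlanePoissonKernel ha hb).const_mul Real.pi⁻¹
      rw [inv_mul_cancel₀ Real.pi_ne_zero] at this
      refine this.congr fun ε ↦ ?_
      rw [integral_of_le (ha.trans hb).le, MeasureTheory.integral_const_mul]
    · filter_upwards [self_mem_nhdsWithin] with ε (hε : 0 < ε)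
      exact (continuous_const.mul (continuous_halfPlanePoissonKernel hε.ne')).aestronglyMeasurable
  refine (hpeak.const_smul Real.pi).congr fun ε ↦ ?_
  rw [integral_of_le (ha.trans hb).le, ← MeasureTheory.integral_smul]
  congr 1 with t
  rw [smul_smul, ← mul_assoc, mul_inv_cancel₀ Real.pi_ne_zero, one_mul]

theorem tendsto_integral_smul_nhdsGT_zero [CompleteSpace E] {u u' : ℝ → ℝ} {F G : ℝ → E}
    {b c : ℝ} (hc : 0 < c) (hcb : c ≤ b) (hu : ∀ t, HasDerivAt u (u' t) t) (hu' : Continuous u')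
    (hF : ContinuousOn F (Ioc 0 b)) (hG : ContinuousOn G (Icc 0 c))
    (hGF : ∀ t ∈ Ioo 0 c, HasDerivAt G (F t) t) :
    Tendsto (fun δ ↦ ∫ t in δ..b, u t • F t) (𝓝[>] 0)
      (𝓝 (u c • G c - u 0 • G 0 - (∫ t in 0..c, u' t • G t) + ∫ t in c..b, u t • F t)) := by
  have hu'G : IntegrableOn (fun t ↦ u' t • G t) (uIcc 0 c) := by
    rw [uIcc_of_le hc.le]
    exact (hu'.continuousOn.smul hG).integrableOn_Icc
  have hucont : Continuous u := continuous_iff_continuousAt.2 fun t ↦ (hu t).continuousAt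
  have huF : ∀ δ r, 0 < δ → δ ≤ r → r ≤ b →
      IntervalIntegrable (fun t ↦ u t • F t) volume δ r := fun δ r hδ hδr hrb ↦
    (hucont.continuousOn.smul (hF.mono (Icc_subset_Ioc hδ hrb))).intervalIntegrable_of_Icc hδr
  have hcont : ContinuousWithinAt
      (fun δ ↦ u c • G c - u δ • G δ - ∫ t in δ..c, u' t • G t) (Icc 0 c) 0 := by
    refine (continuousWithinAt_const.sub ?_).sub ?_
    · exact (hu 0).continuousAt.continuousWithinAt.smul (hG 0 (left_mem_Icc.2 hc.le))
    · have := continuousOn_primitive_interval_left hu'G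
      rw [uIcc_of_le hc.le] at this
      exact this 0 (left_mem_Icc.2 hc.le)
  rw [← nhdsWithin_Ioo_eq_nhdsGT hc]
  refine (((hcont.mono Ioo_subset_Icc_self).tendsto).add_const _).congr' ?_
  filter_upwards [self_mem_nhdsWithin] with δ hδ
  rw [← integral_add_adjacent_intervals (huF δ c hδ.1 hδ.2.le hcb) (huF c b hc hcb le_rfl)]
  congr 1
  refine (integral_smul_deriv_eq_deriv_smul_of_hasDerivAt
    (fun t _ ↦ hucont.continuousWithinAt) ?_ (fun t _ ↦ hu t) ?_
    (hu'.intervalIntegrable _ _) ?_).symm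
  · rw [uIcc_of_le hδ.2.le]
    exact hG.mono (Icc_subset_Icc_left hδ.1.le)
  · intro t ht
    rw [min_eq_left hδ.2.le, max_eq_right hδ.2.le] at ht
    exact hGF t ⟨hδ.1.trans ht.1, ht.2⟩
  · exact (hF.mono (Icc_subset_Ioc hδ.1 hcb)).intervalIntegrable_of_Icc hδ.2.le

theorem tendsto_halfPlanePoissonKernel_boundaryTerm {G : ℝ → E} {t₀ c : ℝ} (hc : 0 ≤ c)
    (hct₀ : c < t₀) (hG : ContinuousOn G (Icc 0 c)) :
    Tendsto (fun ε ↦ halfPlanePoissonKernel t₀ ε c • G c - halfPlanePoissonKernel t₀ ε 0 • G 0 -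
      ∫ t in 0..c, halfPlanePoissonKernelDeriv t₀ ε t • G t) (𝓝[>] 0) (𝓝 0) := by
  have hkernel : ∀ t ≤ c, Tendsto (fun ε ↦ halfPlanePoissonKernel t₀ ε t) (𝓝[>] 0) (𝓝 0) := by
    intro t ht
    have : ContinuousAt (fun ε ↦ halfPlanePoissonKernel t₀ ε t) 0 :=
      ContinuousAt.div (by fun_prop) (by fun_prop)
        (sub_sq_add_sq_ne_zero (Or.inl (ht.trans_lt hct₀).ne))
    simpa using this.tendsto.mono_left nhdsWithin_le_nhds
  have hunif : TendstoUniformlyOn (fun ε t ↦ halfPlanePoissonKernelDeriv t₀ ε t • G t)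
      (fun _ ↦ 0) (𝓝[>] 0) (uIcc 0 c) := by
    rw [uIcc_of_le hc]
    have := tendstoUniformlyOn_nhdsGT_zero_of_continuousOn
      (f := fun ε t ↦ halfPlanePoissonKernelDeriv t₀ ε t • G t) (isCompact_Icc (a := 0) (b := c)) ?_
    · simpa using this
    · rintro ⟨ε, t⟩ ⟨-, ht⟩
      exact ((continuousAt_uncurry_halfPlanePoissonKernelDeriv
        (Or.inl (ht.2.trans_lt hct₀).ne)).continuousWithinAt).smul
          ((hG t ht).comp continuousWithinAt_snd fun p hp ↦ hp.2)
  have hint : Tendsto (fun ε ↦ ∫ t in 0..c, halfPlanePoissonKernelDeriv t₀ ε t • G t)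
      (𝓝[>] 0) (𝓝 0) := by
    have := hunif.tendsto_intervalIntegral_of_continuousOn (μ := volume) ?_
    · simpa using this
    · filter_upwards [self_mem_nhdsWithin] with ε (hε : 0 < ε)
      rw [uIcc_of_le hc]
      exact (continuous_halfPlanePoissonKernelDeriv hε.ne').continuousOn.smul hG
  simpa using (((hkernel c le_rfl).smul_const (G c)).sub
    ((hkernel 0 hc).smul_const (G 0))).sub hint

theorem sub_eq_integral_of_tendsto_integral {F G : ℝ → E} {b s t : ℝ}
    (hF : ContinuousOn F (Ioc 0 b))
    (hG : ∀ t ∈ Ioc 0 b, Tendsto (fun ε ↦ ∫ x in ε..t, F x) (𝓝[>] 0) (𝓝 (G t)))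
    (hs : s ∈ Ioc 0 b) (ht : t ∈ Ioc 0 b) : G t - G s = ∫ x in s..t, F x := by
  have hint : ∀ ε ∈ Ioo 0 (min s t), ∀ r ∈ Ioc 0 b, min s t ≤ r →
      IntervalIntegrable F volume ε r := fun ε hε r hr hsr ↦
    (hF.mono (Icc_subset_Ioc hε.1 hr.2)).intervalIntegrable_of_Icc (hε.2.trans_le hsr).le
  refine tendsto_nhds_unique ((hG t ht).sub (hG s hs)) (tendsto_const_nhds.congr' ?_)
  filter_upwards [Ioo_mem_nhdsGT (lt_min hs.1 ht.1)] with ε hε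
  exact (integral_interval_sub_left (hint ε hε t ht (min_le_right s t))
    (hint ε hε s hs (min_le_left s t))).symm

theorem hasDerivAt_of_tendsto_integral [CompleteSpace E] {F G : ℝ → E} {b t : ℝ}
    (hF : ContinuousOn F (Ioc 0 b))
    (hG : ∀ t ∈ Ioc 0 b, Tendsto (fun ε ↦ ∫ x in ε..t, F x) (𝓝[>] 0) (𝓝 (G t)))
    (ht : t ∈ Ioo 0 b) : HasDerivAt G (F t) t := by
  have hs : t / 2 ∈ Ioc 0 b := ⟨by linarith [ht.1], by linarith [ht.1, ht.2]⟩
  have hprim := integral_hasDerivAt_right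
    ((hF.mono (Icc_subset_Ioc hs.1 ht.2.le)).intervalIntegrable_of_Icc (by linarith [ht.1]))
    ((hF.mono Ioo_subset_Ioc_self).stronglyMeasurableAtFilter isOpen_Ioo t ht)
    (hF.continuousAt (Ioc_mem_nhds ht.1 ht.2))
  refine (hprim.const_add (G (t / 2))).congr_of_eventuallyEq ?_
  filter_upwards [Ioo_mem_nhds ht.1 ht.2] with x hx
  rw [← sub_eq_integral_of_tendsto_integral hF hG hs (Ioo_subset_Ioc_self hx), add_sub_cancel]

theorem continuousOn_Ico_of_tendsto_integral [CompleteSpace E] {F G : ℝ → E} {b : ℝ}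
    (hF : ContinuousOn F (Ioc 0 b))
    (hG : ∀ t ∈ Ioc 0 b, Tendsto (fun ε ↦ ∫ x in ε..t, F x) (𝓝[>] 0) (𝓝 (G t)))
    (hG0 : ContinuousWithinAt G (Ioi 0) 0) : ContinuousOn G (Ico 0 b) := by
  intro t ht
  rcases ht.1.eq_or_lt with rfl | ht0
  · exact (continuousWithinAt_Ioi_iff_Ici.1 hG0).mono Ico_subset_Ici_self
  · exact (hasDerivAt_of_tendsto_integral hF hG ⟨ht0, ht.2⟩).continuousAt.continuousWithinAt

end VectorValued

section Complex

open Complex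

variable {η : ℂ} {ε : ℝ}

theorem add_mul_I_mul_ne_ofReal_mul (hη : η ≠ 0) (hε : ε ≠ 0) (t₀ t : ℝ) :
    (t₀ : ℂ) * η + ε * I * η ≠ t * η := by
  intro h
  have : ((t₀ : ℂ) + ε * I - t) * η = 0 := by linear_combination h
  exact hε (by simpa using congrArg im ((mul_eq_zero.1 this).resolve_right hη))

theorem sub_mul_I_mul_ne_ofReal_mul (hη : η ≠ 0) (hε : ε ≠ 0) (t₀ t : ℝ) :
    (t₀ : ℂ) * η - ε * I * η ≠ t * η := by
  simpa [sub_eq_add_neg] using add_mul_I_mul_ne_ofReal_mul hη (neg_ne_zero.2 hε) t₀ t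

theorem div_sub_div_eq_halfPlanePoissonKernel (hη : η ≠ 0) (hε : ε ≠ 0) (w : ℂ) (t₀ t : ℝ) :
    w / (t * η - (t₀ * η + ε * I * η)) - w / (t * η - (t₀ * η - ε * I * η)) =
      2 * I / η * (halfPlanePoissonKernel t₀ ε t • w) := by
  have ep : (t : ℂ) * η - (t₀ * η + ε * I * η) = (t - t₀ - ε * I) * η := by ring
  have em : (t : ℂ) * η - (t₀ * η - ε * I * η) = (t - t₀ + ε * I) * η := by ring
  have hp := left_ne_zero_of_mul (ep ▸ sub_ne_zero.2 (add_mul_I_mul_ne_ofReal_mul hη hε t₀ t).symm)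
  have hm := left_ne_zero_of_mul (em ▸ sub_ne_zero.2 (sub_mul_I_mul_ne_ofReal_mul hη hε t₀ t).symm)
  have hd : ((t - t₀) ^ 2 + ε ^ 2 : ℂ) ≠ 0 := by
    exact_mod_cast sub_sq_add_sq_ne_zero (t := t) (t₀ := t₀) (Or.inr hε)
  rw [ep, em, halfPlanePoissonKernel, real_smul]
  push_cast
  field_simp
  linear_combination (2 * w * (ε : ℂ) ^ 3 * I) * I_sq

theorem integral_sub_integral_eq_halfPlanePoissonKernel (hη : η ≠ 0) (hε : ε ≠ 0) {f : ℝ → ℂ}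
    {t₀ a b : ℝ} (hab : a ≤ b) (hf : ContinuousOn f (Icc a b)) :
    (∫ t in a..b, f t / (t * η - (t₀ * η + ε * I * η))) -
        ∫ t in a..b, f t / (t * η - (t₀ * η - ε * I * η)) =
      2 * I / η * ∫ t in a..b, halfPlanePoissonKernel t₀ ε t • f t := by
  have hint : ∀ ζ : ℂ, (∀ t : ℝ, ζ ≠ t * η) →
      IntervalIntegrable (fun t : ℝ ↦ f t / (t * η - ζ)) volume a b := fun ζ hζ ↦
    (hf.div (by fun_prop) fun t _ ↦ sub_ne_zero.2 (hζ t).symm).intervalIntegrable_of_Icc hab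
  rw [← integral_sub (hint _ (add_mul_I_mul_ne_ofReal_mul hη hε t₀))
    (hint _ (sub_mul_I_mul_ne_ofReal_mul hη hε t₀)), ← intervalIntegral.integral_const_mul]
  exact integral_congr fun t _ ↦ div_sub_div_eq_halfPlanePoissonKernel hη hε (f t) t₀ t

end Complex

theorem stmt_13_general (η₁ : ℂ) (hη₁ : η₁ ≠ 0)
    (V : Set ℂ)
    (hseg : ∀ t : ℝ, 0 < t → t ≤ 1 → (t : ℂ) * η₁ ∈ V)
    (g : ℂ → ℂ) (hg : DifferentiableOn ℂ g V)
    (G : ℝ → ℂ) (hG0 : G 0 = 0)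
    (hG : ∀ t : ℝ, 0 < t → t ≤ 1 →
      Tendsto (fun ε : ℝ => ∫ s in ε..t, g ((s : ℂ) * η₁) * η₁) (𝓝[>] 0) (𝓝 (G t)))
    (hGlim : Tendsto G (𝓝[>] 0) (𝓝 0))
    (Φ : ℂ → ℂ)
    (hΦ : ∀ ζ : ℂ, (∀ t : ℝ, 0 ≤ t → t ≤ 1 → ζ ≠ (t : ℂ) * η₁) →
      Tendsto (fun ε : ℝ =>
          (1 / (2 * (Real.pi : ℂ) * Complex.I)) *
            ∫ t in ε..1, g ((t : ℂ) * η₁) * η₁ / ((t : ℂ) * η₁ - ζ))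
        (𝓝[>] 0) (𝓝 (Φ ζ))) :
    ∀ t₀ : ℝ, 0 < t₀ → t₀ < 1 →
      Tendsto (fun ε : ℝ =>
          Φ ((t₀ : ℂ) * η₁ + (ε : ℂ) * Complex.I * η₁) -
            Φ ((t₀ : ℂ) * η₁ - (ε : ℂ) * Complex.I * η₁))
        (𝓝[>] 0) (𝓝 (g ((t₀ : ℂ) * η₁))) := by
  intro t₀ ht₀ ht₁
  set F : ℝ → ℂ := fun t ↦ g (t * η₁) * η₁
  have hc : t₀ / 2 ∈ Ioo 0 t₀ := ⟨by positivity, by linarith⟩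
  have hF : ContinuousOn F (Ioc 0 1) :=
    (hg.continuousOn.comp (by fun_prop : Continuous fun t : ℝ ↦ (t : ℂ) * η₁).continuousOn
      fun t ht ↦ hseg t ht.1 ht.2).mul continuousOn_const
  have hG' : ∀ t ∈ Ioc 0 1, Tendsto (fun ε ↦ ∫ x in ε..t, F x) (𝓝[>] 0) (𝓝 (G t)) :=
    fun t ht ↦ hG t ht.1 ht.2
  have hGc : ContinuousOn G (Icc 0 (t₀ / 2)) :=
    (continuousOn_Ico_of_tendsto_integral hF hG' (by rwa [ContinuousWithinAt, hG0])).mono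
      (Icc_subset_Ico_right (hc.2.trans ht₁))
  have hlim := ((tendsto_halfPlanePoissonKernel_boundaryTerm hc.1.le hc.2 hGc).add
    (tendsto_integral_halfPlanePoissonKernel_smul hc.2 ht₁
      (hF.mono (Icc_subset_Ioc hc.1 le_rfl)))).const_mul (Real.pi * η₁)⁻¹
  rw [show (Real.pi * η₁)⁻¹ * (0 + Real.pi • F t₀) = g (t₀ * η₁) by
    simp only [F, zero_add, Complex.real_smul]; field_simp] at hlim
  refine hlim.congr' ?_
  filter_upwards [self_mem_nhdsWithin] with ε (hε : 0 < ε)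
  have himproper := tendsto_integral_smul_nhdsGT_zero hc.1 (hc.2.trans ht₁).le
    (fun t ↦ hasDerivAt_halfPlanePoissonKernel (t₀ := t₀) hε.ne')
    (continuous_halfPlanePoissonKernelDeriv hε.ne') hF hGc
    fun t ht ↦ hasDerivAt_of_tendsto_integral hF hG' ⟨ht.1, ht.2.trans (hc.2.trans ht₁)⟩
  refine tendsto_nhds_unique ((himproper.const_mul _).congr' ?_)
    ((hΦ _ fun t _ _ ↦ add_mul_I_mul_ne_ofReal_mul hη₁ hε.ne' t₀ t).sub
      (hΦ _ fun t _ _ ↦ sub_mul_I_mul_ne_ofReal_mul hη₁ hε.ne' t₀ t))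
  filter_upwards [Ioo_mem_nhdsGT one_pos] with δ hδ
  rw [← mul_sub, integral_sub_integral_eq_halfPlanePoissonKernel hη₁ hε.ne' hδ.2.le
    (hF.mono (Icc_subset_Ioc hδ.1 le_rfl))]
  field_simp

/-- var[Φ] = g (Proposition 6.3, Part II, CNP Pré II.4.2.1): the jump of the
adapted major Φ across the cut segment equals the minor g. -/
theorem stmt_13 (η₁ : ℂ) (hη₁ : η₁ ≠ 0)
    (V : Set ℂ) (hV : IsOpen V)
    (hseg : ∀ t : ℝ, 0 < t → t ≤ 1 → (t : ℂ) * η₁ ∈ V)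
    (g : ℂ → ℂ) (hg : DifferentiableOn ℂ g V)
    (G : ℝ → ℂ) (hG0 : G 0 = 0)
    (hG : ∀ t : ℝ, 0 < t → t ≤ 1 →
      Tendsto (fun ε : ℝ => ∫ s in ε..t, g ((s : ℂ) * η₁) * η₁) (𝓝[>] 0) (𝓝 (G t)))
    (hGlim : Tendsto G (𝓝[>] 0) (𝓝 0))
    (Φ : ℂ → ℂ)
    (hΦ : ∀ ζ : ℂ, (∀ t : ℝ, 0 ≤ t → t ≤ 1 → ζ ≠ (t : ℂ) * η₁) →
      Tendsto (fun ε : ℝ =>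
          (1 / (2 * (Real.pi : ℂ) * Complex.I)) *
            ∫ t in ε..1, g ((t : ℂ) * η₁) * η₁ / ((t : ℂ) * η₁ - ζ))
        (𝓝[>] 0) (𝓝 (Φ ζ))) :
    ∀ t₀ : ℝ, 0 < t₀ → t₀ < 1 →
      Tendsto (fun ε : ℝ =>
          Φ ((t₀ : ℂ) * η₁ + (ε : ℂ) * Complex.I * η₁) -
            Φ ((t₀ : ℂ) * η₁ - (ε : ℂ) * Complex.I * η₁))
        (𝓝[>] 0) (𝓝 (g ((t₀ : ℂ) * η₁))) :=
  stmt_13_general η₁ hη₁ V hseg g hg G hG0 hG hGlim Φ hΦ
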